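/- arXiv:2207.11405 — 3 statements merged into one kernel-verified Lean document; each statement's English description precedes it below -/
import Mathlib

section
/- Let g̃(s,t) = 2g(s,t) for s > 0 and g̃(s,t) = 1 for s ≤ 0, where g(s,t) = (1/√π) ∫_{s/√(-2t)}^∞ e^{-x²} dx and t < 0. Then g̃ is continuous on ℝ × (-∞,0), and for s > 0 it satisfies ∂ₜg̃(s,t) + (1/2)·max(g̃''(s,t), 0) = 0 with g̃''(s,t) ≥ 0, while for s < 0 it satisfies the same equation trivially (all derivatives vanish). -/
/-! For `t < 0`, `g(s,t) = Φ(s/√(-2t))/√π` with `Φ(a) = ∫_a^∞ e^{-x²}` is a self-similar solution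
of the backward heat equation `∂ₜg + ½ ∂ₛ²g = 0`, and `∂ₛ²g ≥ 0` for `s ≥ 0` since `Φ'' ≥ 0` on
`[0, ∞)`. As `g` is antitone in `s` with `g(0,t) = 1/2`, we have `g̃ = min(2g, 1)`, which gives
continuity; for `s < 0`, `g̃` is locally constant. -/

open Real MeasureTheory

noncomputable def g (s t : ℝ) : ℝ :=
  (1 / Real.sqrt π) * ∫ x in Set.Ioi (s / Real.sqrt (-2 * t)), Real.exp (-x ^ 2)

noncomputable def gTilde (s t : ℝ) : ℝ := if s > 0 then 2 * g s t else 1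

open Set Filter Topology

theorem hasDerivAt_integral_Ioi {E : Type*} [NormedAddCommGroup E] [NormedSpace ℝ E]
    [CompleteSpace E] {f : ℝ → E} (hf : Integrable f) (hfc : Continuous f) (a : ℝ) :
    HasDerivAt (fun b => ∫ x in Ioi b, f x) (-f a) a := by
  have hsplit : (fun b => ∫ x in Ioi b, f x) =
      fun b => (∫ x in Ioi 0, f x) - ∫ x in (0 : ℝ)..b, f x := by
    funext b
    rw [← intervalIntegral.integral_Ioi_sub_Ioi' hf.integrableOn hf.integrableOn, sub_sub_cancel]
  rw [hsplit]
  simpa using (intervalIntegral.integral_hasDerivAt_right hf.intervalIntegrable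
    hfc.aestronglyMeasurable.stronglyMeasurableAtFilter hfc.continuousAt).const_sub _

theorem integrable_exp_neg_sq : Integrable fun x : ℝ => exp (-x ^ 2) := by
  simpa using integrable_exp_neg_mul_sq one_pos

noncomputable def gaussianTail (a : ℝ) : ℝ := ∫ x in Ioi a, exp (-x ^ 2)

theorem hasDerivAt_gaussianTail (a : ℝ) : HasDerivAt gaussianTail (-exp (-a ^ 2)) a :=
  hasDerivAt_integral_Ioi integrable_exp_neg_sq (by fun_prop) a

theorem continuous_gaussianTail : Continuous gaussianTail :=
  continuous_iff_continuousAt.2 fun a => (hasDerivAt_gaussianTail a).continuousAt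

theorem gaussianTail_zero : gaussianTail 0 = √π / 2 := by
  simpa [gaussianTail] using integral_gaussian_Ioi 1

theorem antitone_gaussianTail : Antitone gaussianTail := fun _ _ hab =>
  setIntegral_mono_set integrable_exp_neg_sq.integrableOn
    (.of_forall fun _ => (exp_pos _).le) (Ioi_subset_Ioi hab).eventuallyLE

theorem g_eq_gaussianTail (s t : ℝ) : g s t = gaussianTail (s / √(-2 * t)) / √π := by
  rw [g, gaussianTail, one_div_mul_eq_div]

theorem g_zero (t : ℝ) : g 0 t = 1 / 2 := by
  rw [g_eq_gaussianTail, zero_div, gaussianTail_zero]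
  field_simp [(sqrt_pos.2 pi_pos).ne']

theorem antitone_g (t : ℝ) : Antitone (g · t) := fun a b hab => by
  simp only [g_eq_gaussianTail]
  exact div_le_div_of_nonneg_right
    (antitone_gaussianTail (div_le_div_of_nonneg_right hab (sqrt_nonneg _))) (sqrt_nonneg _)

theorem gTilde_eq_min (s t : ℝ) : gTilde s t = min (2 * g s t) 1 := by
  unfold gTilde
  split_ifs with hs
  · rw [min_eq_left]
    linarith [antitone_g t hs.le, g_zero t]
  · rw [min_eq_right]
    linarith [antitone_g t (not_lt.1 hs), g_zero t]

theorem continuousOn_g : ContinuousOn (fun p : ℝ × ℝ => g p.1 p.2) (univ ×ˢ Iio 0) := by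
  simp only [g_eq_gaussianTail]
  refine (continuous_gaussianTail.comp_continuousOn
    (continuousOn_fst.div (by fun_prop) ?_)).div_const _
  rintro ⟨s, t⟩ ⟨-, ht : t < 0⟩
  exact (sqrt_pos.2 (by linarith)).ne'

theorem continuousOn_gTilde :
    ContinuousOn (fun p : ℝ × ℝ => gTilde p.1 p.2) (univ ×ˢ Iio 0) := by
  simp only [gTilde_eq_min]
  exact (continuousOn_const.mul continuousOn_g).inf continuousOn_const

theorem hasDerivAt_div_sqrt_neg_two_mul (s : ℝ) {t : ℝ} (ht : t < 0) :
    HasDerivAt (fun t => s / √(-2 * t)) (s / √(-2 * t) ^ 3) t := by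
  have hc : 0 < √(-2 * t) := sqrt_pos.2 (by linarith)
  refine ((hasDerivAt_const t s).div
    (((hasDerivAt_id t).const_mul (-2)).sqrt (by simp; linarith)) hc.ne').congr_deriv ?_
  simp only [id, mul_one]
  field_simp
  rw [sq_sqrt (by linarith)]
  ring

theorem hasDerivAt_g_snd (s : ℝ) {t : ℝ} (ht : t < 0) :
    HasDerivAt (g s) (-(s * exp (-(s / √(-2 * t)) ^ 2)) / (√π * √(-2 * t) ^ 3)) t := by
  rw [show g s = fun t => gaussianTail (s / √(-2 * t)) / √π from funext (g_eq_gaussianTail s)]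
  refine (((hasDerivAt_gaussianTail _).comp t
    (hasDerivAt_div_sqrt_neg_two_mul s ht)).div_const √π).congr_deriv ?_
  field_simp

theorem hasDerivAt_g_fst {t : ℝ} (s : ℝ) :
    HasDerivAt (g · t) (-exp (-(s / √(-2 * t)) ^ 2) / (√π * √(-2 * t))) s := by
  rw [show (g · t) = fun s => gaussianTail (s / √(-2 * t)) / √π from funext (g_eq_gaussianTail · t)]
  refine (((hasDerivAt_gaussianTail _).comp s
    ((hasDerivAt_id s).div_const √(-2 * t))).div_const √π).congr_deriv ?_
  simp only [id]
  ring

theorem iteratedDeriv_two_g_fst {t : ℝ} (ht : t < 0) (s : ℝ) :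
    iteratedDeriv 2 (g · t) s = 2 * s * exp (-(s / √(-2 * t)) ^ 2) / (√π * √(-2 * t) ^ 3) := by
  have hc : 0 < √(-2 * t) := sqrt_pos.2 (by linarith)
  have hd : deriv (g · t) = fun s => -exp (-(s / √(-2 * t)) ^ 2) / (√π * √(-2 * t)) :=
    funext fun s => (hasDerivAt_g_fst s).deriv
  rw [iteratedDeriv_succ, iteratedDeriv_one, hd]
  refine ((((hasDerivAt_id s).div_const _).pow 2).neg.exp.neg.div_const _).deriv.trans ?_
  simp only [id, Pi.pow_apply, Pi.neg_apply]
  field_simp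
  ring

theorem deriv_g_snd_add_half_iteratedDeriv_two_g_fst (s : ℝ) {t : ℝ} (ht : t < 0) :
    deriv (g s) t + 1 / 2 * iteratedDeriv 2 (g · t) s = 0 := by
  rw [(hasDerivAt_g_snd s ht).deriv, iteratedDeriv_two_g_fst ht]
  ring

theorem iteratedDeriv_two_g_fst_nonneg {s t : ℝ} (hs : 0 ≤ s) (ht : t < 0) :
    0 ≤ iteratedDeriv 2 (g · t) s := by
  rw [iteratedDeriv_two_g_fst ht]
  positivity

theorem deriv_gTilde_snd_of_pos {s : ℝ} (hs : 0 < s) (t : ℝ) :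
    deriv (gTilde s) t = 2 * deriv (g s) t := by
  rw [show gTilde s = fun t => 2 * g s t from funext fun _ => if_pos hs, deriv_const_mul_field]

theorem iteratedDeriv_gTilde_fst_of_pos {s : ℝ} (hs : 0 < s) (t : ℝ) (n : ℕ) :
    iteratedDeriv n (gTilde · t) s = 2 * iteratedDeriv n (g · t) s := by
  have h : (gTilde · t) =ᶠ[𝓝 s] fun u => 2 * g u t :=
    (eventually_gt_nhds hs).mono fun _ hu => if_pos hu
  rw [(h.iteratedDeriv n).eq_of_nhds, iteratedDeriv_const_mul_field]

theorem deriv_gTilde_snd_of_neg {s : ℝ} (hs : s < 0) (t : ℝ) : deriv (gTilde s) t = 0 := by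
  rw [show gTilde s = fun _ => 1 from funext fun _ => if_neg hs.not_gt, deriv_const]

theorem iteratedDeriv_gTilde_fst_of_neg {s : ℝ} (hs : s < 0) (t : ℝ) {n : ℕ} (hn : n ≠ 0) :
    iteratedDeriv n (gTilde · t) s = 0 := by
  have h : (gTilde · t) =ᶠ[𝓝 s] fun _ => 1 :=
    (eventually_lt_nhds hs).mono fun _ hu => if_neg hu.not_gt
  rw [(h.iteratedDeriv n).eq_of_nhds, iteratedDeriv_const, if_neg hn]

/-- `g̃` is continuous on `ℝ × (-∞,0)`; for `s > 0` it satisfies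
`∂ₜg̃ + (1/2)·max(g̃'', 0) = 0` with `g̃'' ≥ 0`; for `s < 0` all derivatives vanish. -/
theorem stmt_7 :
    ContinuousOn (fun p : ℝ × ℝ => gTilde p.1 p.2) (Set.univ ×ˢ Set.Iio 0) ∧
    (∀ s > (0 : ℝ), ∀ t < (0 : ℝ),
      deriv (fun t' => gTilde s t') t
        + (1 / 2) * max (iteratedDeriv 2 (fun s' => gTilde s' t) s) 0 = 0 ∧
      iteratedDeriv 2 (fun s' => gTilde s' t) s ≥ 0) ∧
    (∀ s < (0 : ℝ), ∀ t < (0 : ℝ),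
      deriv (fun t' => gTilde s t') t = 0 ∧
      iteratedDeriv 2 (fun s' => gTilde s' t) s = 0) := by
  refine ⟨continuousOn_gTilde, fun s hs t ht => ?_, fun s hs t _ =>
    ⟨deriv_gTilde_snd_of_neg hs t, iteratedDeriv_gTilde_fst_of_neg hs t two_ne_zero⟩⟩
  have hheat := deriv_g_snd_add_half_iteratedDeriv_two_g_fst s ht
  have hconvex := iteratedDeriv_two_g_fst_nonneg hs.le ht
  rw [deriv_gTilde_snd_of_pos hs, iteratedDeriv_gTilde_fst_of_pos hs,
    max_eq_left (by positivity)]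
  exact ⟨by linear_combination 2 * hheat, by positivity⟩
end

section
/- (Leading-order min-max) Let ξ ∈ ℝᴺ be a nonzero vector with all components nonpositive, and let A ⊂ ℝᴺ be a bounded set containing an open neighborhood of the origin. Then min over probability vectors p ∈ Δ_N of max over {z ∈ A : p·z ≥ 0} of ξ·z equals 0, and the minimum is achieved only at p = -ξ/‖ξ‖₁; moreover at that p, equality ξ·z = 0 in the inner maximum holds exactly when p·z = 0. -/
/-!
Write `S = ∑ |ξⱼ|` and `p* = -ξ / S`, so that `ξ = -S • p*` with `S > 0` and `p*` a probability
vector. At `p*` the constraint `p* ⬝ᵥ z ≥ 0` forces `ξ ⬝ᵥ z = -S (p* ⬝ᵥ z) ≤ 0`, with value `0`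
attained at `z = 0`. For any other probability vector `p` the hyperplanes `p⊥` and `p*⊥` differ,
so some `z` has `p ⬝ᵥ z > 0 > p* ⬝ᵥ z`; a small positive multiple of it lies in `A` and is a
feasible point with strictly positive objective.
-/

open Filter Topology

open scoped Matrix

section

variable {ι : Type*} [Fintype ι]

lemma sum_abs_pos {ξ : ι → ℝ} (hξ : ξ ≠ 0) : 0 < ∑ j, |ξ j| := by
  obtain ⟨i, hi⟩ := Function.ne_iff.mp hξ
  exact Finset.sum_pos' (fun j _ => abs_nonneg (ξ j)) ⟨i, Finset.mem_univ i, abs_pos.mpr hi⟩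

lemma sum_neg_div_sum_abs_of_nonpos {ξ : ι → ℝ} (hξ0 : ξ ≠ 0) (hξ : ∀ i, ξ i ≤ 0) :
    ∑ i, -ξ i / ∑ j, |ξ j| = 1 := by
  rw [← Finset.sum_div, div_eq_one_iff_eq (sum_abs_pos hξ0).ne']
  exact Finset.sum_congr rfl fun i _ => (abs_of_nonpos (hξ i)).symm

lemma eq_neg_sum_abs_smul {ξ : ι → ℝ} (hξ : ξ ≠ 0) :
    ξ = -(∑ j, |ξ j|) • fun i => -ξ i / ∑ j, |ξ j| := by
  ext i
  simp only [Pi.smul_apply, smul_eq_mul]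
  field_simp [(sum_abs_pos hξ).ne']

lemma exists_dotProduct_pos_and_neg {p q : ι → ℝ} (hp : ∑ i, p i = 1) (hq : ∑ i, q i = 1)
    (hpq : p ≠ q) : ∃ z : ι → ℝ, 0 < p ⬝ᵥ z ∧ q ⬝ᵥ z < 0 := by
  set d := p - q
  have hd : 0 < d ⬝ᵥ d :=
    lt_of_le_of_ne (Finset.sum_nonneg fun i _ => mul_self_nonneg (d i))
      (Ne.symm (dotProduct_self_eq_zero.not.mpr (sub_ne_zero.mpr hpq)))
  have hdd : d ⬝ᵥ d = p ⬝ᵥ d - q ⬝ᵥ d := sub_dotProduct p q d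
  -- Shifting `d` by a multiple of `1` moves `p ⬝ᵥ d` and `q ⬝ᵥ d` by the same amount, since
  -- `∑ p = ∑ q = 1`; shifting by their midpoint puts them at `±(d ⬝ᵥ d) / 2`.
  set t := (p ⬝ᵥ d + q ⬝ᵥ d) / 2 with ht
  have hshift {r : ι → ℝ} (hr : ∑ i, r i = 1) : r ⬝ᵥ (d - t • 1) = r ⬝ᵥ d - t := by
    rw [dotProduct_sub, dotProduct_smul, dotProduct_one, hr, smul_eq_mul, mul_one]
  exact ⟨d - t • 1, by rw [hshift hp]; linarith, by rw [hshift hq]; linarith⟩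

end

lemma exists_pos_smul_mem_of_mem_nhds {E : Type*} [AddCommGroup E] [Module ℝ E]
    [TopologicalSpace E] [ContinuousSMul ℝ E] {A : Set E} (hA : A ∈ 𝓝 0) (z : E) :
    ∃ c : ℝ, 0 < c ∧ c • z ∈ A := by
  have h : Tendsto (fun c : ℝ => c • z) (𝓝[>] 0) (𝓝 0) := by
    have hcont : Continuous fun c : ℝ => c • z := continuous_id.smul continuous_const
    simpa using (hcont.tendsto 0).mono_left nhdsWithin_le_nhds
  exact (eventually_mem_nhdsWithin.and (h.eventually hA)).exists

section

variable {ι : Type*} [Fintype ι]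

/-- The inner maximum `max {ξ ⬝ᵥ z : z ∈ A, p ⬝ᵥ z ≥ 0}` is the supremum of this set. -/
def constrainedValues (A : Set (ι → ℝ)) (p ξ : ι → ℝ) : Set ℝ :=
  {x | ∃ z ∈ A, p ⬝ᵥ z ≥ 0 ∧ x = ξ ⬝ᵥ z}

lemma bddAbove_constrainedValues {A : Set (ι → ℝ)} (hA : Bornology.IsBounded A) (p ξ : ι → ℝ) :
    BddAbove (constrainedValues A p ξ) := by
  have : IsCompact ((ξ ⬝ᵥ ·) '' closure A) :=
    hA.isCompact_closure.image (by fun_prop)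
  refine this.bddAbove.mono ?_
  rintro _ ⟨z, hz, -, rfl⟩
  exact ⟨z, subset_closure hz, rfl⟩

lemma sSup_constrainedValues_neg_smul_self {A : Set (ι → ℝ)} (h0 : 0 ∈ A) (q : ι → ℝ) {s : ℝ}
    (hs : 0 ≤ s) : sSup (constrainedValues A q (-s • q)) = 0 := by
  refine IsGreatest.csSup_eq ⟨⟨0, h0, by simp, by simp⟩, ?_⟩
  rintro _ ⟨z, -, hqz, rfl⟩
  rw [smul_dotProduct, smul_eq_mul]
  exact mul_nonpos_of_nonpos_of_nonneg (neg_nonpos.mpr hs) hqz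

lemma sSup_constrainedValues_neg_smul_pos {A : Set (ι → ℝ)} (hA : Bornology.IsBounded A)
    (hA0 : A ∈ 𝓝 0) {p q : ι → ℝ} (hp : ∑ i, p i = 1) (hq : ∑ i, q i = 1) (hpq : p ≠ q)
    {s : ℝ} (hs : 0 < s) : 0 < sSup (constrainedValues A p (-s • q)) := by
  obtain ⟨z, hpz, hqz⟩ := exists_dotProduct_pos_and_neg hp hq hpq
  obtain ⟨c, hc, hczA⟩ := exists_pos_smul_mem_of_mem_nhds hA0 z
  have hmem : (-s • q) ⬝ᵥ (c • z) ∈ constrainedValues A p (-s • q) :=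
    ⟨c • z, hczA, by rw [dotProduct_smul]; positivity, rfl⟩
  refine lt_of_lt_of_le ?_ (le_csSup (bddAbove_constrainedValues hA p _) hmem)
  rw [smul_dotProduct, dotProduct_smul, smul_eq_mul, smul_eq_mul]
  nlinarith [mul_pos hs hc]

end

/-- Leading-order min-max: for `ξ ≠ 0` with nonpositive components and a bounded set `A`
containing a neighborhood of the origin, the min over probability vectors `p` of
`sup {ξ·z : z ∈ A, p·z ≥ 0}` is `0`, achieved only at `p* = -ξ/‖ξ‖₁`; and at `p*`,
`ξ·z = 0` exactly when `p*·z = 0`. -/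
theorem stmt_11 (N : ℕ) (ξ : Fin N → ℝ) (hξ0 : ξ ≠ 0) (hξ : ∀ i, ξ i ≤ 0)
    (A : Set (Fin N → ℝ)) (hAbd : Bornology.IsBounded A)
    (hA0 : ∃ ε > (0 : ℝ), Metric.ball (0 : Fin N → ℝ) ε ⊆ A)
    (pstar : Fin N → ℝ) (hpstar : pstar = fun i => -ξ i / ∑ j, |ξ j|) :
    (∀ i, 0 ≤ pstar i) ∧ (∑ i, pstar i) = 1 ∧
    sSup {x : ℝ | ∃ z ∈ A, (∑ i, pstar i * z i) ≥ 0 ∧ x = ∑ i, ξ i * z i} = 0 ∧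
    (∀ p : Fin N → ℝ, (∀ i, 0 ≤ p i) → (∑ i, p i) = 1 → p ≠ pstar →
      sSup {x : ℝ | ∃ z ∈ A, (∑ i, p i * z i) ≥ 0 ∧ x = ∑ i, ξ i * z i} > 0) ∧
    (∀ z ∈ A, (∑ i, pstar i * z i) ≥ 0 →
      ((∑ i, ξ i * z i) = 0 ↔ (∑ i, pstar i * z i) = 0)) := by
  have hS := sum_abs_pos hξ0
  have hξS : ξ = -(∑ j, |ξ j|) • pstar := hpstar ▸ eq_neg_sum_abs_smul hξ0
  have hsum : ∑ i, pstar i = 1 := hpstar ▸ sum_neg_div_sum_abs_of_nonpos hξ0 hξ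
  obtain ⟨ε, hε, hball⟩ := hA0
  have hAnhds : A ∈ 𝓝 0 := mem_of_superset (Metric.ball_mem_nhds 0 hε) hball
  refine ⟨fun i => hpstar ▸ div_nonneg (neg_nonneg.mpr (hξ i)) hS.le, hsum, ?_, ?_, ?_⟩
  · rw [hξS]
    exact sSup_constrainedValues_neg_smul_self (mem_of_mem_nhds hAnhds) pstar hS.le
  · intro p _ hp hpne
    rw [hξS]
    exact sSup_constrainedValues_neg_smul_pos hAbd hAnhds hp hsum hpne hS
  · intro z _ _
    change ξ ⬝ᵥ z = 0 ↔ pstar ⬝ᵥ z = 0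
    rw [hξS, smul_dotProduct, smul_eq_mul, mul_eq_zero, neg_eq_zero, or_iff_right hS.ne']
end

section
/- If p ∈ Δ_N and ξ ∈ ℝᴺ is nonzero with nonpositive components, and p is not parallel to -ξ, and A ⊂ ℝᴺ contains an open neighborhood of the origin, then sup over {z ∈ A : p·z ≥ 0} of ξ·z is strictly positive. -/
/-!
Since a neighbourhood of the origin absorbs every vector, it suffices to find some `z` with
`p ⬝ᵥ z ≥ 0` and `ξ ⬝ᵥ z > 0`. If there were none, then `ξ ⬝ᵥ z ≤ 0` and `ξ ⬝ᵥ (-z) ≤ 0` for every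
`z` in the kernel of `p ⬝ᵥ ·`, so `ξ = c • p`; testing against a `w` with `p ⬝ᵥ w = 1` gives
`c ≤ 0`, and `c ≠ 0` because `ξ ≠ 0`, so `p = -c⁻¹ • ξ` would be a nonnegative multiple of `-ξ`.
-/

open Filter Topology

theorem exists_pos_smul_mem_of_mem_nhds_zero {E : Type*} [AddCommGroup E] [TopologicalSpace E]
    [Module ℝ E] [ContinuousSMul ℝ E] {A : Set E} (hA : A ∈ 𝓝 (0 : E)) (z : E) :
    ∃ t > (0 : ℝ), t • z ∈ A := by
  have hlim : Tendsto (fun t : ℝ => t • z) (𝓝[>] 0) (𝓝 0) := by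
    simpa using (tendsto_id.smul_const z).mono_left (nhdsWithin_le_nhds (a := (0 : ℝ)))
  obtain ⟨t, htA, ht⟩ := ((hlim.eventually hA).and self_mem_nhdsWithin).exists
  exact ⟨t, ht, htA⟩

theorem LinearMap.exists_nonpos_eq_smul_of_nonneg_imp_nonpos {E : Type*} [AddCommGroup E]
    [Module ℝ E] {f g : E →ₗ[ℝ] ℝ} (h : ∀ z, 0 ≤ f z → g z ≤ 0) :
    ∃ c ≤ (0 : ℝ), g = c • f := by
  have hker : ∀ z, f z = 0 → g z = 0 := fun z hz =>
    le_antisymm (h z hz.ge) (by simpa using h (-z) (by simp [hz]))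
  by_cases hf : f = 0
  · refine ⟨0, le_rfl, LinearMap.ext fun z => ?_⟩
    simpa using hker z (by simp [hf])
  obtain ⟨w, hw⟩ : ∃ w, f w = 1 := by
    obtain ⟨v, hv⟩ : ∃ v, f v ≠ 0 := by
      by_contra! hv
      exact hf (LinearMap.ext hv)
    exact ⟨(f v)⁻¹ • v, by simp [hv]⟩
  refine ⟨g w, h w (by simp [hw]), LinearMap.ext fun z => ?_⟩
  have hz := hker (z - f z • w) (by simp [hw])
  simp only [map_sub, map_smul, smul_eq_mul] at hz
  simp only [LinearMap.smul_apply, smul_eq_mul]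
  linarith

theorem exists_dotProduct_nonneg_pos {ι : Type*} [Fintype ι] {p ξ : ι → ℝ} (hξ : ξ ≠ 0)
    (hp : ¬∃ lam : ℝ, 0 ≤ lam ∧ p = fun i => -lam * ξ i) :
    ∃ z, 0 ≤ p ⬝ᵥ z ∧ 0 < ξ ⬝ᵥ z := by
  classical
  by_contra! h
  obtain ⟨c, hc, hξp⟩ := LinearMap.exists_nonpos_eq_smul_of_nonneg_imp_nonpos
    (f := dotProductBilin ℝ ℝ p) (g := dotProductBilin ℝ ℝ ξ) h
  have hξc : ξ = c • p := funext fun i => by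
    simpa [dotProduct_single] using LinearMap.congr_fun hξp (Pi.single i 1)
  have hc0 : c ≠ 0 := by
    rintro rfl
    exact hξ (by simpa using hξc)
  refine hp ⟨-c⁻¹, by simpa using hc, funext fun i => ?_⟩
  simp [hξc, hc0]

theorem stmt_12_general (N : ℕ) (ξ : Fin N → ℝ) (hξ0 : ξ ≠ 0)
    (p : Fin N → ℝ)
    (hnp : ¬∃ lam : ℝ, 0 ≤ lam ∧ p = fun i => -lam * ξ i)
    (A : Set (Fin N → ℝ)) (hA0 : ∃ ε > (0 : ℝ), Metric.ball (0 : Fin N → ℝ) ε ⊆ A) :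
    ∃ z ∈ A, (∑ i, p i * z i) ≥ 0 ∧ (∑ i, ξ i * z i) > 0 := by
  obtain ⟨z, hpz, hξz⟩ := exists_dotProduct_nonneg_pos hξ0 hnp
  obtain ⟨ε, hε, hball⟩ := hA0
  have hA : A ∈ 𝓝 0 := mem_of_superset (Metric.ball_mem_nhds 0 hε) hball
  obtain ⟨t, ht, htz⟩ := exists_pos_smul_mem_of_mem_nhds_zero hA z
  refine ⟨t • z, htz, ?_, ?_⟩
  · change 0 ≤ p ⬝ᵥ (t • z)
    rw [dotProduct_smul, smul_eq_mul]
    exact mul_nonneg ht.le hpz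
  · change 0 < ξ ⬝ᵥ (t • z)
    rw [dotProduct_smul, smul_eq_mul]
    exact mul_pos ht hξz

/-- If `p` is a probability vector not parallel to `-ξ` (where `ξ ≠ 0` has nonpositive
components) and `A` contains a neighborhood of the origin, then the supremum of `ξ·z`
over `{z ∈ A : p·z ≥ 0}` is strictly positive: there is such a `z` with `ξ·z > 0`. -/
theorem stmt_12 (N : ℕ) (ξ : Fin N → ℝ) (hξ0 : ξ ≠ 0) (hξ : ∀ i, ξ i ≤ 0)
    (p : Fin N → ℝ) (hp0 : ∀ i, 0 ≤ p i) (hp1 : (∑ i, p i) = 1)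
    (hnp : ¬∃ lam : ℝ, 0 ≤ lam ∧ p = fun i => -lam * ξ i)
    (A : Set (Fin N → ℝ)) (hA0 : ∃ ε > (0 : ℝ), Metric.ball (0 : Fin N → ℝ) ε ⊆ A) :
    ∃ z ∈ A, (∑ i, p i * z i) ≥ 0 ∧ (∑ i, ξ i * z i) > 0 :=
  stmt_12_general N ξ hξ0 p hnp A hA0
end
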